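/- arXiv:1907.02210 — 2 statements merged into one kernel-verified Lean document; each statement's English description precedes it below -/
import Mathlib

section
/- For f ∈ C_0^∞(ℝ^{1+n}) continuous and nonnegative (or absolutely integrable along the relevant sets), the normal operator N = L'L of the light ray transform satisfies L'Lf(t,x) = ∫_{ℝⁿ} [f(t - |x-x'|, x') + f(t + |x-x'|, x')] · |x-x'|^{1-n} dx'. -/
open MeasureTheory Measure Set Metric

private lemma measurable_norm_rpow {α : Type*} [NormedAddCommGroup α] [MeasurableSpace α]
    [OpensMeasurableSpace α] (c : ℝ) : Measurable fun z : α => ‖z‖ ^ c := by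
  have h : (fun z : α => ‖z‖ ^ c)
      = fun z => if ‖z‖ = 0 then ((0:ℝ) ^ c) else Real.exp (Real.log ‖z‖ * c) := by
    funext z
    rcases eq_or_ne ‖z‖ 0 with h | h
    · simp [h]
    · have hpos : 0 < ‖z‖ := (norm_nonneg z).lt_of_ne (Ne.symm h)
      simp [h, Real.rpow_def_of_pos hpos]
  rw [h]
  exact Measurable.ite (measurable_norm (measurableSet_singleton 0)) measurable_const
    (Real.measurable_exp.comp ((Real.measurable_log.comp measurable_norm).mul measurable_const))

private lemma lpolar {n : ℕ} (hn : 1 ≤ n)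
    (g : EuclideanSpace ℝ (Fin n) → ENNReal) (hg : Measurable g) :
    ∫⁻ θ : Metric.sphere (0 : EuclideanSpace ℝ (Fin n)) 1,
        (∫⁻ r in Set.Ioi (0:ℝ),
          g (r • (θ : EuclideanSpace ℝ (Fin n))) * ENNReal.ofReal (r ^ (n-1)))
        ∂(volume.toSphere)
      = ∫⁻ z, g z := by
  haveI : Nonempty (Fin n) := ⟨⟨0, hn⟩⟩
  haveI : Nontrivial (EuclideanSpace ℝ (Fin n)) := inferInstance
  have hdim : Module.finrank ℝ (EuclideanSpace ℝ (Fin n)) - 1 = n - 1 := by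
    rw [finrank_euclideanSpace_fin]
  have key := (volume : Measure (EuclideanSpace ℝ (Fin n))).measurePreserving_homeomorphUnitSphereProd
  rw [hdim] at key
  have hG : Measurable fun p : Metric.sphere (0:EuclideanSpace ℝ (Fin n)) 1 × Set.Ioi (0:ℝ) =>
      g ((p.2 : ℝ) • (p.1 : EuclideanSpace ℝ (Fin n))) := by fun_prop
  calc ∫⁻ θ : Metric.sphere (0:EuclideanSpace ℝ (Fin n)) 1,
        (∫⁻ r in Set.Ioi (0:ℝ), g (r • (θ:EuclideanSpace ℝ (Fin n))) * ENNReal.ofReal (r ^ (n-1)))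
        ∂(volume.toSphere)
      = ∫⁻ θ : Metric.sphere (0:EuclideanSpace ℝ (Fin n)) 1,
        (∫⁻ r : Set.Ioi (0:ℝ), g ((r:ℝ) • (θ:EuclideanSpace ℝ (Fin n))) ∂(volumeIoiPow (n-1)))
        ∂(volume.toSphere) := by
        refine lintegral_congr fun θ => ?_
        rw [Measure.volumeIoiPow,
          lintegral_withDensity_eq_lintegral_mul _ (by fun_prop) (by fun_prop)]
        simp only [Pi.mul_apply]
        rw [lintegral_subtype_comap measurableSet_Ioi
          (fun r : ℝ => ENNReal.ofReal (r ^ (n-1)) * g (r • (θ:EuclideanSpace ℝ (Fin n))))]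
        exact setLIntegral_congr_fun measurableSet_Ioi
          (fun r hr => by simp [mul_comm])
    _ = ∫⁻ p : Metric.sphere (0:EuclideanSpace ℝ (Fin n)) 1 × Set.Ioi (0:ℝ),
          g ((p.2 : ℝ) • (p.1 : EuclideanSpace ℝ (Fin n)))
          ∂((volume.toSphere).prod (volumeIoiPow (n-1))) := by
        rw [lintegral_prod _ hG.aemeasurable]
    _ = ∫⁻ z : ({0}ᶜ : Set (EuclideanSpace ℝ (Fin n))), g z
          ∂((volume : Measure (EuclideanSpace ℝ (Fin n))).comap (↑)) := by
        rw [← key.lintegral_comp hG]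
        refine lintegral_congr fun z => ?_
        have hz : (z : EuclideanSpace ℝ (Fin n)) ≠ 0 := z.2
        simp [homeomorphUnitSphereProd, smul_inv_smul₀ (norm_ne_zero_iff.mpr hz)]
    _ = ∫⁻ z in ({0}ᶜ : Set (EuclideanSpace ℝ (Fin n))), g z
          ∂(volume : Measure (EuclideanSpace ℝ (Fin n))) :=
        lintegral_subtype_comap (measurableSet_singleton _).compl _
    _ = ∫⁻ z, g z := by rw [MeasureTheory.restrict_compl_singleton]

/-- The normal operator of the light ray transform on `ℝ^{1+n}`:
`L'Lf(t,x) = ∫ [f(t-|x-x'|,x') + f(t+|x-x'|,x')] |x-x'|^{1-n} dx'`. -/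
theorem lightRay_normal_operator {n : ℕ} (hn : 1 ≤ n)
    (f : ℝ × EuclideanSpace ℝ (Fin n) → ℝ)
    (hf : Continuous f) (hsupp : HasCompactSupport f) (hpos : ∀ p, 0 ≤ f p)
    (t : ℝ) (x : EuclideanSpace ℝ (Fin n)) :
    ∫ θ : Metric.sphere (0 : EuclideanSpace ℝ (Fin n)) 1,
        (∫ s : ℝ, f (s, x - t • (θ : EuclideanSpace ℝ (Fin n))
            + s • (θ : EuclideanSpace ℝ (Fin n))))
        ∂(volume.toSphere)
      = ∫ x' : EuclideanSpace ℝ (Fin n),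
          (f (t - ‖x - x'‖, x') + f (t + ‖x - x'‖, x')) * ‖x - x'‖ ^ ((1 : ℝ) - n) := by
  haveI : Nonempty (Fin n) := ⟨⟨0, hn⟩⟩
  obtain ⟨R, hR⟩ := hsupp.isBounded.subset_closedBall 0
  -- f vanishes when the time coordinate is large
  have hvanish : ∀ (a : ℝ) (b : EuclideanSpace ℝ (Fin n)), R < |a| → f (a, b) = 0 := by
    intro a b h
    by_contra hne
    have hmem : (a, b) ∈ tsupport f := subset_tsupport f hne
    have h1 : ‖((a, b) : ℝ × EuclideanSpace ℝ (Fin n))‖ ≤ R := by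
      have := hR hmem
      rwa [Metric.mem_closedBall, dist_zero_right] at this
    have h2 : |a| ≤ ‖((a, b) : ℝ × EuclideanSpace ℝ (Fin n))‖ := by
      simpa using norm_fst_le ((a, b) : ℝ × EuclideanSpace ℝ (Fin n))
    linarith
  -- integrability along lines
  have hint : ∀ θ : Metric.sphere (0 : EuclideanSpace ℝ (Fin n)) 1,
      Integrable (fun s : ℝ => f (s, x - t • (θ : EuclideanSpace ℝ (Fin n))
        + s • (θ : EuclideanSpace ℝ (Fin n)))) := by
    intro θ
    refine Continuous.integrable_of_hasCompactSupport (hf.comp (by fun_prop)) ?_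
    refine HasCompactSupport.intro (isCompact_Icc (a := -(|R|+1)) (b := |R|+1)) ?_
    intro s hs
    apply hvanish
    rw [Set.mem_Icc, not_and_or, not_le, not_le] at hs
    rcases hs with hs | hs
    · calc R ≤ |R| := le_abs_self R
        _ < |s| := by
          rw [abs_of_nonpos (by nlinarith [abs_nonneg R] : s ≤ 0)]
          linarith
    · calc R ≤ |R| := le_abs_self R
        _ < s := by linarith
        _ ≤ |s| := le_abs_self s

  -- measurability of the RHS integrand
  have hC : Measurable fun x' : EuclideanSpace ℝ (Fin n) => ‖x - x'‖ ^ ((1:ℝ) - n) :=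
    (measurable_norm_rpow ((1:ℝ) - n)).comp (measurable_const.sub measurable_id)
  have hA : Measurable fun x' : EuclideanSpace ℝ (Fin n) => f (t - ‖x - x'‖, x') :=
    (hf.comp (by fun_prop)).measurable
  have hB : Measurable fun x' : EuclideanSpace ℝ (Fin n) => f (t + ‖x - x'‖, x') :=
    (hf.comp (by fun_prop)).measurable
  have hHmeas : Measurable fun x' : EuclideanSpace ℝ (Fin n) =>
      (f (t - ‖x - x'‖, x') + f (t + ‖x - x'‖, x')) * ‖x - x'‖ ^ ((1:ℝ) - n) :=
    (hA.add hB).mul hC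
  -- convert both sides to lintegrals
  have hGnn : 0 ≤ᵐ[volume.toSphere] fun θ : Metric.sphere (0 : EuclideanSpace ℝ (Fin n)) 1 =>
      ∫ s : ℝ, f (s, x - t • (θ : EuclideanSpace ℝ (Fin n)) + s • (θ : EuclideanSpace ℝ (Fin n))) :=
    Filter.Eventually.of_forall fun θ => integral_nonneg fun s => hpos _
  have hGsm : AEStronglyMeasurable (fun θ : Metric.sphere (0 : EuclideanSpace ℝ (Fin n)) 1 =>
      ∫ s : ℝ, f (s, x - t • (θ : EuclideanSpace ℝ (Fin n)) + s • (θ : EuclideanSpace ℝ (Fin n))))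
      volume.toSphere := by
    apply StronglyMeasurable.aestronglyMeasurable
    exact StronglyMeasurable.integral_prod_right'
      (f := fun p : (Metric.sphere (0 : EuclideanSpace ℝ (Fin n)) 1) × ℝ =>
        f (p.2, x - t • (p.1 : EuclideanSpace ℝ (Fin n)) + p.2 • (p.1 : EuclideanSpace ℝ (Fin n))))
      (hf.comp (by fun_prop)).stronglyMeasurable
  have hHnn : 0 ≤ᵐ[(volume : Measure (EuclideanSpace ℝ (Fin n)))] fun x' =>
      (f (t - ‖x - x'‖, x') + f (t + ‖x - x'‖, x')) * ‖x - x'‖ ^ ((1:ℝ) - n) :=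
    Filter.Eventually.of_forall fun x' =>
      mul_nonneg (add_nonneg (hpos _) (hpos _)) (Real.rpow_nonneg (norm_nonneg _) _)
  rw [integral_eq_lintegral_of_nonneg_ae hGnn hGsm,
    integral_eq_lintegral_of_nonneg_ae hHnn hHmeas.aestronglyMeasurable]
  congr 1
  -- the inner lintegral splits into forward and backward light rays
  have step1 : ∀ θ : Metric.sphere (0 : EuclideanSpace ℝ (Fin n)) 1,
      ENNReal.ofReal (∫ s : ℝ, f (s, x - t • (θ : EuclideanSpace ℝ (Fin n))
          + s • (θ : EuclideanSpace ℝ (Fin n))))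
      = (∫⁻ r in Set.Ioi (0:ℝ),
          ENNReal.ofReal (f (t + r, x + r • (θ : EuclideanSpace ℝ (Fin n)))))
        + ∫⁻ r in Set.Ioi (0:ℝ),
          ENNReal.ofReal (f (t - r, x - r • (θ : EuclideanSpace ℝ (Fin n)))) := by
    intro θ
    rw [ofReal_integral_eq_lintegral_ofReal (hint θ)
      (Filter.Eventually.of_forall fun s => hpos _)]
    have hshift := (measurePreserving_add_right (volume : Measure ℝ) t).lintegral_comp
      (f := fun s : ℝ => ENNReal.ofReal (f (s, x - t • (θ : EuclideanSpace ℝ (Fin n))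
        + s • (θ : EuclideanSpace ℝ (Fin n))))) (by fun_prop)
    rw [← hshift]
    have harg : ∀ u : ℝ, x - t • (θ : EuclideanSpace ℝ (Fin n))
        + (u + t) • (θ : EuclideanSpace ℝ (Fin n))
        = x + u • (θ : EuclideanSpace ℝ (Fin n)) := fun u => by rw [add_smul]; abel
    have hcong : (fun u : ℝ => ENNReal.ofReal (f (u + t, x - t • (θ : EuclideanSpace ℝ (Fin n))
        + (u + t) • (θ : EuclideanSpace ℝ (Fin n)))))
        = fun u : ℝ => ENNReal.ofReal (f (t + u, x + u • (θ : EuclideanSpace ℝ (Fin n)))) := by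
      funext u; rw [harg, add_comm u t]
    rw [hcong,
      ← lintegral_add_compl (fun u : ℝ => ENNReal.ofReal
        (f (t + u, x + u • (θ : EuclideanSpace ℝ (Fin n))))) measurableSet_Ioi]
    congr 1
    rw [compl_Ioi, ← Measure.restrict_congr_set Iio_ae_eq_Iic]
    have hrefl := (Measure.measurePreserving_neg (volume : Measure ℝ)).setLIntegral_comp_preimage
      (s := Set.Iio (0:ℝ)) measurableSet_Iio
      (f := fun u : ℝ => ENNReal.ofReal (f (t + u, x + u • (θ : EuclideanSpace ℝ (Fin n)))))
      (by fun_prop)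
    have hpre : (Neg.neg ⁻¹' Set.Iio (0:ℝ)) = Set.Ioi 0 := by ext r; simp
    rw [hpre] at hrefl
    rw [← hrefl]
    refine setLIntegral_congr_fun measurableSet_Ioi
      (fun r _ => ?_)
    simp [sub_eq_add_neg]
  rw [lintegral_congr step1]
  -- measurability of the two pieces
  have hPm : Measurable fun θ : Metric.sphere (0 : EuclideanSpace ℝ (Fin n)) 1 =>
      ∫⁻ r in Set.Ioi (0:ℝ),
        ENNReal.ofReal (f (t + r, x + r • (θ : EuclideanSpace ℝ (Fin n)))) := by
    exact Measurable.lintegral_prod_right'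
      (f := fun p : (Metric.sphere (0 : EuclideanSpace ℝ (Fin n)) 1) × ℝ =>
        ENNReal.ofReal (f (t + p.2, x + p.2 • (p.1 : EuclideanSpace ℝ (Fin n))))) (by fun_prop)
  rw [lintegral_add_left hPm]
  -- polar coordinates for each piece
  have hg1 : Measurable fun z : EuclideanSpace ℝ (Fin n) =>
      ENNReal.ofReal (f (t + ‖z‖, x + z) * ‖z‖ ^ ((1:ℝ) - n)) :=
    ENNReal.measurable_ofReal.comp
      (((hf.comp (by fun_prop)).measurable).mul (measurable_norm_rpow _))
  have hg2 : Measurable fun z : EuclideanSpace ℝ (Fin n) =>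
      ENNReal.ofReal (f (t - ‖z‖, x - z) * ‖z‖ ^ ((1:ℝ) - n)) :=
    ENNReal.measurable_ofReal.comp
      (((hf.comp (by fun_prop)).measurable).mul (measurable_norm_rpow _))
  have hg2' : Measurable fun z : EuclideanSpace ℝ (Fin n) =>
      ENNReal.ofReal (f (t - ‖z‖, x + z) * ‖z‖ ^ ((1:ℝ) - n)) :=
    ENNReal.measurable_ofReal.comp
      (((hf.comp (by fun_prop)).measurable).mul (measurable_norm_rpow _))
  have hone : ∀ r : ℝ, 0 < r → r ^ ((1:ℝ) - n) * (r : ℝ) ^ (n - 1) = 1 := by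
    intro r hr
    rw [← Real.rpow_natCast r (n-1), ← Real.rpow_add hr,
      show (1:ℝ) - n + ((n-1:ℕ):ℝ) = 0 by push_cast [Nat.cast_sub hn]; ring, Real.rpow_zero]
  have hP : (∫⁻ θ : Metric.sphere (0 : EuclideanSpace ℝ (Fin n)) 1,
      (∫⁻ r in Set.Ioi (0:ℝ),
        ENNReal.ofReal (f (t + r, x + r • (θ : EuclideanSpace ℝ (Fin n))))) ∂volume.toSphere)
      = ∫⁻ z, ENNReal.ofReal (f (t + ‖z‖, x + z) * ‖z‖ ^ ((1:ℝ) - n)) := by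
    rw [← lpolar hn _ hg1]
    refine lintegral_congr fun θ => ?_
    refine setLIntegral_congr_fun measurableSet_Ioi
      (fun r hr => ?_)
    have hr' : (0:ℝ) < r := hr
    have hnorm : ‖r • (θ : EuclideanSpace ℝ (Fin n))‖ = r := by
      rw [norm_smul, Real.norm_eq_abs, abs_of_pos hr',
        mem_sphere_zero_iff_norm.mp θ.2, mul_one]
    rw [hnorm, ← ENNReal.ofReal_mul (mul_nonneg (hpos _) (Real.rpow_nonneg hr'.le _)),
      mul_assoc, hone r hr', mul_one]
  have hQ : (∫⁻ θ : Metric.sphere (0 : EuclideanSpace ℝ (Fin n)) 1,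
      (∫⁻ r in Set.Ioi (0:ℝ),
        ENNReal.ofReal (f (t - r, x - r • (θ : EuclideanSpace ℝ (Fin n))))) ∂volume.toSphere)
      = ∫⁻ z, ENNReal.ofReal (f (t - ‖z‖, x + z) * ‖z‖ ^ ((1:ℝ) - n)) := by
    have h2 : (∫⁻ θ : Metric.sphere (0 : EuclideanSpace ℝ (Fin n)) 1,
        (∫⁻ r in Set.Ioi (0:ℝ),
          ENNReal.ofReal (f (t - r, x - r • (θ : EuclideanSpace ℝ (Fin n))))) ∂volume.toSphere)
        = ∫⁻ z, ENNReal.ofReal (f (t - ‖z‖, x - z) * ‖z‖ ^ ((1:ℝ) - n)) := by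
      rw [← lpolar hn _ hg2]
      refine lintegral_congr fun θ => ?_
      refine setLIntegral_congr_fun measurableSet_Ioi
        (fun r hr => ?_)
      have hr' : (0:ℝ) < r := hr
      have hnorm : ‖r • (θ : EuclideanSpace ℝ (Fin n))‖ = r := by
        rw [norm_smul, Real.norm_eq_abs, abs_of_pos hr',
          mem_sphere_zero_iff_norm.mp θ.2, mul_one]
      rw [hnorm, ← ENNReal.ofReal_mul (mul_nonneg (hpos _) (Real.rpow_nonneg hr'.le _)),
        mul_assoc, hone r hr', mul_one]
    rw [h2, ← (Measure.measurePreserving_neg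
      (volume : Measure (EuclideanSpace ℝ (Fin n)))).lintegral_comp hg2]
    refine lintegral_congr fun z => ?_
    simp only [norm_neg, sub_neg_eq_add]
  rw [hP, hQ]
  have hsum : (∫⁻ z, ENNReal.ofReal (f (t + ‖z‖, x + z) * ‖z‖ ^ ((1:ℝ) - n)))
      + (∫⁻ z, ENNReal.ofReal (f (t - ‖z‖, x + z) * ‖z‖ ^ ((1:ℝ) - n)))
      = ∫⁻ z, ENNReal.ofReal
          ((f (t - ‖z‖, x + z) + f (t + ‖z‖, x + z)) * ‖z‖ ^ ((1:ℝ) - n)) := by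
    rw [← lintegral_add_left hg1]
    refine lintegral_congr fun z => ?_
    rw [← ENNReal.ofReal_add (mul_nonneg (hpos _) (Real.rpow_nonneg (norm_nonneg _) _))
      (mul_nonneg (hpos _) (Real.rpow_nonneg (norm_nonneg _) _)), ← add_mul,
      add_comm (f (t + ‖z‖, x + z))]
  have hHo : Measurable fun x' : EuclideanSpace ℝ (Fin n) => ENNReal.ofReal
      ((f (t - ‖x - x'‖, x') + f (t + ‖x - x'‖, x')) * ‖x - x'‖ ^ ((1:ℝ) - n)) :=
    ENNReal.measurable_ofReal.comp hHmeas
  rw [hsum, ← (measurePreserving_add_left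
    (volume : Measure (EuclideanSpace ℝ (Fin n))) x).lintegral_comp hHo]
  refine lintegral_congr fun z => ?_
  simp only [sub_add_cancel_left, norm_neg]
end

section
/- Consider the Minkowski point-line relation C = {((z,θ,ζ,θ̂),(t,x,τ,ξ)) : x = z+tθ, τ = -θ·ξ, ζ = ξ, θ̂ = t(ξ - (ξ·θ)θ)} with θ ∈ S^{n-1}, ξ ≠ 0. If ((z,θ,ζ,θ̂),(t,x,τ,ξ)) ∈ C and |τ| = |ξ| (lightlike), then ζ is parallel to θ and θ̂ = 0. Conversely, if ζ is parallel to θ and (t,x,τ,ξ) satisfies the relation with ζ = ξ, then |τ| = |ξ|. -/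
/-! For a unit vector `θ`, Pythagoras gives `‖ξ - ⟪ξ, θ⟫ θ‖² = ‖ξ‖² - ⟪ξ, θ⟫²`. Hence `|τ| = |⟪θ, ξ⟫|`
equals `‖ξ‖` exactly when `ξ` coincides with its projection `⟪ξ, θ⟫ θ` onto the line `ℝθ`, i.e. when `ξ`
is parallel to `θ`; and then `θ̂ = t (ξ - ⟪ξ, θ⟫ θ)` vanishes. -/

open RealInnerProductSpace

section UnitVector

variable {E : Type*} [NormedAddCommGroup E] [InnerProductSpace ℝ E] {θ : E}

theorem norm_sub_inner_smul_sq_of_norm_eq_one (hθ : ‖θ‖ = 1) (ξ : E) :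
    ‖ξ - ⟪ξ, θ⟫ • θ‖ ^ 2 = ‖ξ‖ ^ 2 - ⟪ξ, θ⟫ ^ 2 := by
  rw [norm_sub_sq_real, real_inner_smul_right, norm_smul, Real.norm_eq_abs, hθ, mul_one, sq_abs]
  ring

theorem abs_inner_eq_norm_iff_eq_inner_smul (hθ : ‖θ‖ = 1) (ξ : E) :
    |⟪ξ, θ⟫| = ‖ξ‖ ↔ ξ = ⟪ξ, θ⟫ • θ := by
  rw [← sub_eq_zero (a := ξ), ← norm_eq_zero, ← sq_eq_zero_iff,
    norm_sub_inner_smul_sq_of_norm_eq_one hθ, sub_eq_zero, ← sq_abs ⟪ξ, θ⟫,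
    sq_eq_sq₀ (norm_nonneg _) (abs_nonneg _), eq_comm]

theorem exists_eq_smul_iff_eq_inner_smul (hθ : ‖θ‖ = 1) (ξ : E) :
    (∃ c : ℝ, ξ = c • θ) ↔ ξ = ⟪ξ, θ⟫ • θ := by
  refine ⟨?_, fun h ↦ ⟨_, h⟩⟩
  rintro ⟨c, rfl⟩
  rw [real_inner_smul_left, real_inner_self_eq_norm_sq, hθ, one_pow, mul_one]

end UnitVector

theorem minkowski_relation_lightlike_characterization_general {n : ℕ}
    (ζ ξ θ θhat : EuclideanSpace ℝ (Fin n)) (t τ : ℝ)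
    (hθ : ‖θ‖ = 1)
    (hτ : τ = -⟪θ, ξ⟫) (hζ : ζ = ξ)
    (hθhat : θhat = t • (ξ - ⟪ξ, θ⟫ • θ)) :
    ((|τ| = ‖ξ‖) → (∃ c : ℝ, ζ = c • θ) ∧ θhat = 0)
    ∧ ((∃ c : ℝ, ζ = c • θ) → |τ| = ‖ξ‖) := by
  have hτ_abs : |τ| = |⟪ξ, θ⟫| := by rw [hτ, abs_neg, real_inner_comm]
  rw [hτ_abs, hζ, exists_eq_smul_iff_eq_inner_smul hθ, abs_inner_eq_norm_iff_eq_inner_smul hθ]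
  refine ⟨fun hpar ↦ ⟨hpar, ?_⟩, id⟩
  rw [hθhat, ← hpar, sub_self, smul_zero]

/-- In the Minkowski point-line relation
`C = {((z,θ,ζ,θ̂),(t,x,τ,ξ)) : x = z+tθ, τ = -θ·ξ, ζ = ξ, θ̂ = t(ξ-(ξ·θ)θ)}`,
the covector `(τ,ξ)` is lightlike (`|τ| = |ξ|`) iff `ζ` is parallel to `θ`;
and in the lightlike case moreover `θ̂ = 0`. -/
theorem minkowski_relation_lightlike_characterization {n : ℕ}
    (z x ζ ξ θ θhat : EuclideanSpace ℝ (Fin n)) (t τ : ℝ)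
    (hθ : ‖θ‖ = 1) (hξ : ξ ≠ 0)
    (hx : x = z + t • θ) (hτ : τ = -⟪θ, ξ⟫) (hζ : ζ = ξ)
    (hθhat : θhat = t • (ξ - ⟪ξ, θ⟫ • θ)) :
    ((|τ| = ‖ξ‖) → (∃ c : ℝ, ζ = c • θ) ∧ θhat = 0)
    ∧ ((∃ c : ℝ, ζ = c • θ) → |τ| = ‖ξ‖) :=
  minkowski_relation_lightlike_characterization_general ζ ξ θ θhat t τ hθ hτ hζ hθhat
end
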